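/- Let n ≥ 3 and 1 ≤ k ≤ n−1. Let λ₁ ≥ λ₂ ≥ … ≥ λ_n > 0, set κ_α = 1/λ_α and F^{αα} = σ_{k−1}(κ|α)·κ_α²/σ_k(κ)². Define, for a symmetric n×n real matrix ξ, I₃ = −Σ_{α≠γ} σ_{k−2}(κ|αγ)·κ_α²κ_γ²·ξ_{αγ}² + 2·Σ_{α≠γ} σ_{k−1}(κ|α)·κ_α²·κ_γ·ξ_{αγ}². Then (1/σ_k(κ)²)·I₃ ≥ Σ_{α,γ≥2, α≠γ} F^{αα}·ξ_{αγ}²/λ_γ + Σ_{γ≥2} F^{11}·ξ_{1γ}²/λ_γ + (1 + (n−k)/(n−1))·Σ_{α≥2} F^{αα}·ξ_{α1}²/λ₁. -/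

import Mathlib

open scoped Classical

noncomputable section

/-- The `j`-th elementary symmetric function of the family `κ` restricted to the
finite index set `s`; it is `1` for `j = 0`, and `0` for `j < 0` (or for `j`
larger than the cardinality of `s`). -/
def sigmaE {ι : Type*} (s : Finset ι) (j : ℤ) (κ : ι → ℝ) : ℝ :=
  if 0 ≤ j then ∑ t ∈ s.powersetCard j.toNat, ∏ i ∈ t, κ i else 0

/-- `σ_j(κ)`, the `j`-th elementary symmetric polynomial evaluated at `κ`. -/
def sigmaV {ι : Type*} [Fintype ι] (j : ℤ) (κ : ι → ℝ) : ℝ :=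
  sigmaE Finset.univ j κ

/-- `σ_j(κ|α)`: `σ_j` of `κ` with the `α`-th entry deleted. -/
def sigmaV1 {ι : Type*} [Fintype ι] [DecidableEq ι] (j : ℤ) (κ : ι → ℝ) (α : ι) : ℝ :=
  sigmaE (Finset.univ.erase α) j κ

/-- `σ_j(κ|αβ)`: `σ_j` of `κ` with the `α`-th and `β`-th entries deleted. -/
def sigmaV2 {ι : Type*} [Fintype ι] [DecidableEq ι] (j : ℤ) (κ : ι → ℝ) (α β : ι) : ℝ :=
  sigmaE ((Finset.univ.erase α).erase β) j κ

/-- `σ_j(A)` for a real `n × n` matrix `A`: the `j`-th elementary symmetric function of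
the eigenvalues of `A` when `A` is symmetric (= Hermitian over `ℝ`), junk value `0`
otherwise. -/
def sigmaMat {n : ℕ} (j : ℤ) (A : Matrix (Fin n) (Fin n) ℝ) : ℝ :=
  if h : A.IsHermitian then sigmaV j h.eigenvalues else 0

/-- The Hessian quotient operator `F(A) = σ_n(A)/σ_{n-k}(A)`. -/
def Fquot {n : ℕ} (k : ℕ) (A : Matrix (Fin n) (Fin n) ℝ) : ℝ :=
  sigmaMat (n : ℤ) A / sigmaMat ((n : ℤ) - (k : ℤ)) A

/-!
Write `T_{αγ} = σ_{k-1}(κ|α) κ_α² κ_γ ξ_{αγ}²`; then the right-hand side is `σ_k(κ)⁻²` times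
`Σ_{α≠γ} c_γ T_{αγ}` with `c_γ = 1 + (n-k)/(n-1)` for `γ = 1` and `c_γ = 1` otherwise, while `I₃`
is a sum of the same shape, so it suffices to compare the terms pair by pair. Expanding
`σ_{k-1}(κ|α) = σ_{k-1}(κ|αγ) + κ_γ σ_{k-2}(κ|αγ)`, the comparison reads
`(c_γ - 1) σ_{k-1}(κ|α) ≤ σ_{k-1}(κ|αγ)`. For `γ ≠ 1` this is positivity. For `γ = 1`, `κ_1` is
the smallest entry, so `σ_{k-1}(κ|α1)` is the largest of the `σ_{k-1}(κ|αi)`, `i ≠ α`, hence at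
least their average, which is `(n-k)/(n-1) · σ_{k-1}(κ|α)`.
-/

open Finset

section ElementarySymmetric

variable {ι : Type*}

lemma sigmaE_of_neg {s : Finset ι} {j : ℤ} (hj : j < 0) (x : ι → ℝ) : sigmaE s j x = 0 := by
  simp [sigmaE, not_le.2 hj]

lemma sigmaE_zero (s : Finset ι) (x : ι → ℝ) : sigmaE s 0 x = 1 := by
  simp [sigmaE]

lemma sigmaE_empty {j : ℤ} (hj : j ≠ 0) (x : ι → ℝ) : sigmaE (∅ : Finset ι) j x = 0 := by
  rcases lt_or_gt_of_ne hj with h | h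
  · exact sigmaE_of_neg h x
  · rw [sigmaE, if_pos h.le, powersetCard_eq_empty.2 (by rw [card_empty]; omega), sum_empty]

lemma sigmaE_nonneg {s : Finset ι} (j : ℤ) {x : ι → ℝ} (hx : ∀ i ∈ s, 0 ≤ x i) :
    0 ≤ sigmaE s j x := by
  unfold sigmaE
  split
  · exact sum_nonneg fun t ht => prod_nonneg fun i hi => hx i ((mem_powersetCard.1 ht).1 hi)
  · rfl

variable [DecidableEq ι]

lemma sigmaE_insert {s : Finset ι} {a : ι} (ha : a ∉ s) (j : ℤ) (x : ι → ℝ) :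
    sigmaE (insert a s) j x = sigmaE s j x + x a * sigmaE s (j - 1) x := by
  rcases lt_trichotomy j 0 with h | rfl | h
  · simp [sigmaE_of_neg h, sigmaE_of_neg (show j - 1 < 0 by omega)]
  · simp [sigmaE_zero, sigmaE_of_neg (show (-1 : ℤ) < 0 by omega)]
  obtain ⟨m, hm⟩ : ∃ m : ℕ, j.toNat = m + 1 := ⟨j.toNat - 1, by omega⟩
  have hm' : (j - 1).toNat = m := by omega
  have hat : ∀ t ∈ s.powersetCard m, a ∉ t := fun t ht h => ha ((mem_powersetCard.1 ht).1 h)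
  simp only [sigmaE, if_pos h.le, if_pos (show 0 ≤ j - 1 by omega), hm, hm',
    powersetCard_succ_insert ha]
  rw [sum_union, sum_image, mul_sum]
  · exact congrArg _ (sum_congr rfl fun t ht => prod_insert (hat t ht))
  · intro t ht u hu h
    rw [← erase_insert (hat t ht), ← erase_insert (hat u hu), h]
  · refine disjoint_left.2 fun t ht ht' => ?_
    obtain ⟨u, -, rfl⟩ := mem_image.1 ht'
    exact ha ((mem_powersetCard.1 ht).1 (mem_insert_self a u))

lemma sigmaE_eq_erase_add {s : Finset ι} {a : ι} (ha : a ∈ s) (j : ℤ) (x : ι → ℝ) :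
    sigmaE s j x = sigmaE (s.erase a) j x + x a * sigmaE (s.erase a) (j - 1) x := by
  conv_lhs => rw [← insert_erase ha]
  exact sigmaE_insert (notMem_erase a s) j x

lemma sum_sigmaE_erase (s : Finset ι) (x : ι → ℝ) (j : ℤ) :
    ∑ i ∈ s, sigmaE (s.erase i) j x = ((#s : ℝ) - j) * sigmaE s j x := by
  induction s using Finset.induction_on generalizing j with
  | empty =>
    rcases eq_or_ne j 0 with rfl | h
    · simp
    · simp [sigmaE_empty h]
  | @insert a s ha ih =>
    have herase : ∀ i ∈ s, sigmaE ((insert a s).erase i) j x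
        = sigmaE (s.erase i) j x + x a * sigmaE (s.erase i) (j - 1) x := fun i hi => by
      rw [erase_insert_of_ne (ne_of_mem_of_not_mem hi ha).symm,
        sigmaE_insert (fun h => ha (mem_of_mem_erase h))]
    rw [sum_insert ha, erase_insert ha, sum_congr rfl herase, sum_add_distrib, ← mul_sum, ih j,
      ih (j - 1), sigmaE_insert ha, card_insert_of_notMem ha]
    push_cast
    ring

lemma sigmaE_erase_le_sigmaE_erase {s : Finset ι} {x : ι → ℝ} (hx : ∀ i ∈ s, 0 ≤ x i)
    {i a : ι} (hi : i ∈ s) (ha : a ∈ s) (hxa : x a ≤ x i) (j : ℤ) :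
    sigmaE (s.erase i) j x ≤ sigmaE (s.erase a) j x := by
  rcases eq_or_ne i a with rfl | hia
  · rfl
  rw [sigmaE_eq_erase_add (mem_erase.2 ⟨hia.symm, ha⟩), sigmaE_eq_erase_add (mem_erase.2 ⟨hia, hi⟩),
    erase_right_comm]
  gcongr
  exact sigmaE_nonneg _ fun l hl => hx l (mem_of_mem_erase (mem_of_mem_erase hl))

lemma card_sub_mul_sigmaE_le_card_mul_sigmaE_erase {s : Finset ι} {x : ι → ℝ}
    (hx : ∀ i ∈ s, 0 ≤ x i) {a : ι} (ha : a ∈ s) (hmin : ∀ i ∈ s, x a ≤ x i) (j : ℤ) :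
    ((#s : ℝ) - j) * sigmaE s j x ≤ #s * sigmaE (s.erase a) j x := by
  rw [← sum_sigmaE_erase, ← nsmul_eq_mul, ← sum_const]
  exact sum_le_sum fun i hi => sigmaE_erase_le_sigmaE_erase hx hi ha (hmin i hi) j

end ElementarySymmetric

section DeletedEntries

variable {ι : Type*} [Fintype ι] [DecidableEq ι] {κ : ι → ℝ} {α γ : ι}

lemma sigmaV1_eq_sigmaV2_add (hγα : γ ≠ α) (j : ℤ) :
    sigmaV1 j κ α = sigmaV2 j κ α γ + κ γ * sigmaV2 (j - 1) κ α γ :=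
  sigmaE_eq_erase_add (mem_erase.2 ⟨hγα, mem_univ γ⟩) j κ

lemma card_sub_div_mul_sigmaV1_le_sigmaV2 (hκ : ∀ i, 0 ≤ κ i) (hγα : γ ≠ α)
    (hmin : ∀ i, κ γ ≤ κ i) (k : ℕ) :
    ((Fintype.card ι : ℝ) - k) / (Fintype.card ι - 1) * sigmaV1 ((k : ℤ) - 1) κ α
      ≤ sigmaV2 ((k : ℤ) - 1) κ α γ := by
  have hcard : ((#(univ.erase α) : ℕ) : ℝ) = Fintype.card ι - 1 := by
    rw [card_erase_of_mem (mem_univ α), card_univ,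
      Nat.cast_sub (Fintype.card_pos_iff.2 ⟨α⟩), Nat.cast_one]
  have h := card_sub_mul_sigmaE_le_card_mul_sigmaE_erase (fun i _ => hκ i)
    (mem_erase.2 ⟨hγα, mem_univ γ⟩) (fun i _ => hmin i) ((k : ℤ) - 1)
  rw [hcard] at h
  push_cast at h
  rw [div_mul_eq_mul_div, sigmaV1, sigmaV2]
  refine div_le_of_le_mul₀ (hcard ▸ Nat.cast_nonneg _) (sigmaE_nonneg _ fun i _ => hκ i) ?_
  linarith

lemma ite_mul_sigmaV1_le (hκ : ∀ i, 0 ≤ κ i) (hγα : γ ≠ α) {i₀ : ι} (hmin : ∀ i, κ i₀ ≤ κ i)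
    (k : ℕ) :
    (if γ = i₀ then 1 + ((Fintype.card ι : ℝ) - k) / (Fintype.card ι - 1) else 1)
        * sigmaV1 ((k : ℤ) - 1) κ α
      ≤ 2 * sigmaV1 ((k : ℤ) - 1) κ α - κ γ * sigmaV2 ((k : ℤ) - 2) κ α γ := by
  have hsplit := sigmaV1_eq_sigmaV2_add (κ := κ) hγα ((k : ℤ) - 1)
  rw [show (k : ℤ) - 1 - 1 = k - 2 by ring] at hsplit
  split_ifs with h
  · subst h
    linarith [card_sub_div_mul_sigmaV1_le_sigmaV2 hκ hγα hmin k]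
  · have hnonneg : 0 ≤ sigmaV2 ((k : ℤ) - 1) κ α γ := sigmaE_nonneg _ fun i _ => hκ i
    linarith

lemma sum_sum_erase_ite_mul_le (hκ : ∀ i, 0 ≤ κ i) {i₀ : ι} (hmin : ∀ i, κ i₀ ≤ κ i) (k : ℕ)
    (ξ : ι → ι → ℝ) :
    ∑ α, ∑ γ ∈ univ.erase α,
        (if γ = i₀ then 1 + ((Fintype.card ι : ℝ) - k) / (Fintype.card ι - 1) else 1)
          * (sigmaV1 ((k : ℤ) - 1) κ α * κ α ^ 2 * κ γ * ξ α γ ^ 2)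
      ≤ -(∑ α, ∑ γ ∈ univ.erase α, sigmaV2 ((k : ℤ) - 2) κ α γ * κ α ^ 2 * κ γ ^ 2 * ξ α γ ^ 2)
        + 2 * ∑ α, ∑ γ ∈ univ.erase α, sigmaV1 ((k : ℤ) - 1) κ α * κ α ^ 2 * κ γ * ξ α γ ^ 2 := by
  rw [mul_sum, ← sum_neg_distrib, ← sum_add_distrib]
  refine sum_le_sum fun α _ => ?_
  rw [mul_sum, ← sum_neg_distrib, ← sum_add_distrib]
  refine sum_le_sum fun γ hγ => ?_
  have hw : 0 ≤ κ α ^ 2 * κ γ * ξ α γ ^ 2 := by have := hκ γ; positivity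
  have h := mul_le_mul_of_nonneg_right (ite_mul_sigmaV1_le hκ (ne_of_mem_erase hγ) hmin k) hw
  linarith

end DeletedEntries

lemma sum_sum_erase_split {ι M : Type*} [Fintype ι] [DecidableEq ι] [AddCommMonoid M] (i₀ : ι)
    (f : ι → ι → M) :
    ∑ α, ∑ γ ∈ univ.erase α, f α γ
      = ∑ α ∈ univ.erase i₀, ∑ γ ∈ (univ.erase i₀).erase α, f α γ
        + ∑ γ ∈ univ.erase i₀, f i₀ γ + ∑ α ∈ univ.erase i₀, f α i₀ := by
  have hrow : ∀ α ∈ univ.erase i₀, ∑ γ ∈ univ.erase α, f α γ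
      = f α i₀ + ∑ γ ∈ (univ.erase i₀).erase α, f α γ := fun α hα => by
    rw [← add_sum_erase _ _ (mem_erase.2 ⟨(ne_of_mem_erase hα).symm, mem_univ i₀⟩),
      erase_right_comm]
  rw [← add_sum_erase univ _ (mem_univ i₀), sum_congr rfl hrow, sum_add_distrib]
  abel

/-- estimate of the term `I₃`, (2.28)–(2.31): with `λ₁ ≥ ⋯ ≥ λ_n > 0`,
`κ_α = 1/λ_α`, `F^{αα} = σ_{k-1}(κ|α)κ_α²/σ_k(κ)²`, and
`I₃ = -Σ_{α≠γ} σ_{k-2}(κ|αγ) κ_α²κ_γ² ξ_{αγ}² + 2 Σ_{α≠γ} σ_{k-1}(κ|α) κ_α² κ_γ ξ_{αγ}²`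
for a symmetric matrix `ξ`, one has
`(1/σ_k(κ)²) I₃ ≥ Σ_{α,γ≥2, α≠γ} F^{αα} ξ_{αγ}²/λ_γ + Σ_{γ≥2} F^{11} ξ_{1γ}²/λ_γ
  + (1 + (n-k)/(n-1)) Σ_{α≥2} F^{αα} ξ_{α1}²/λ₁`. -/
theorem stmt_14 (n k : ℕ) (hn : 3 ≤ n)
    (lam : Fin n → ℝ) (hpos : ∀ α, 0 < lam α) (hord : ∀ α β : Fin n, α ≤ β → lam β ≤ lam α)
    (ξ : Matrix (Fin n) (Fin n) ℝ) :
    let i0 : Fin n := ⟨0, by omega⟩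
    let κ : Fin n → ℝ := fun α => (lam α)⁻¹
    let Fd : Fin n → ℝ := fun α => sigmaV1 ((k : ℤ) - 1) κ α * (κ α) ^ 2 / (sigmaV (k : ℤ) κ) ^ 2
    let I3 : ℝ :=
      -(∑ α, ∑ γ ∈ Finset.univ.erase α,
          sigmaV2 ((k : ℤ) - 2) κ α γ * (κ α) ^ 2 * (κ γ) ^ 2 * (ξ α γ) ^ 2)
      + 2 * ∑ α, ∑ γ ∈ Finset.univ.erase α,
          sigmaV1 ((k : ℤ) - 1) κ α * (κ α) ^ 2 * κ γ * (ξ α γ) ^ 2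
    (1 / (sigmaV (k : ℤ) κ) ^ 2) * I3
      ≥ ∑ α ∈ Finset.univ.erase i0, ∑ γ ∈ (Finset.univ.erase i0).erase α,
            Fd α * (ξ α γ) ^ 2 / lam γ
        + ∑ γ ∈ Finset.univ.erase i0, Fd i0 * (ξ i0 γ) ^ 2 / lam γ
        + (1 + ((n : ℝ) - (k : ℝ)) / ((n : ℝ) - 1)) *
            ∑ α ∈ Finset.univ.erase i0, Fd α * (ξ α i0) ^ 2 / lam i0 := by
  intro i0 κ Fd I3
  have hmin : ∀ i, κ i0 ≤ κ i := fun i => inv_anti₀ (hpos i) (hord i0 i (Nat.zero_le _))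
  have hle := sum_sum_erase_ite_mul_le (fun i => (inv_pos.2 (hpos i)).le) hmin k ξ
  rw [Fintype.card_fin] at hle
  set c : Fin n → ℝ := fun γ => if γ = i0 then 1 + ((n : ℝ) - k) / (n - 1) else 1
  set T : Fin n → Fin n → ℝ := fun α γ => sigmaV1 ((k : ℤ) - 1) κ α * κ α ^ 2 * κ γ * ξ α γ ^ 2
  have hFd : ∀ α γ, Fd α * ξ α γ ^ 2 / lam γ = 1 / sigmaV (k : ℤ) κ ^ 2 * T α γ := fun α γ => by
    simp only [Fd, T, κ]
    ring
  have hc0 : c i0 = 1 + ((n : ℝ) - k) / (n - 1) := if_pos rfl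
  have hc1 : ∀ γ ∈ univ.erase i0, c γ = 1 := fun γ hγ => if_neg (ne_of_mem_erase hγ)
  rw [ge_iff_le]
  calc _ = 1 / sigmaV (k : ℤ) κ ^ 2 * ∑ α, ∑ γ ∈ univ.erase α, c γ * T α γ := by
        rw [sum_sum_erase_split i0]
        simp only [hFd, mul_add, mul_sum]
        congr 1
        congr 1
        · exact sum_congr rfl fun α _ => sum_congr rfl fun γ hγ => by
            rw [hc1 γ (mem_of_mem_erase hγ), one_mul]
        · exact sum_congr rfl fun γ hγ => by rw [hc1 γ hγ, one_mul]
        · exact sum_congr rfl fun α _ => by rw [hc0]; ring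
    _ ≤ 1 / sigmaV (k : ℤ) κ ^ 2 * I3 := mul_le_mul_of_nonneg_left hle (by positivity)
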